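/- Let G be a simple graph on a vertex type α, let H be a simple graph on a vertex type β, and let f : α → β be a map such that whenever x and y are adjacent in G, either f x = f y or f x is adjacent to f y in H. Assume: (i) H is connected; (ii) for every vertex v of β, the fiber f⁻¹(v) is nonempty and the subgraph of G induced on f⁻¹(v) is connected; (iii) for every pair of adjacent vertices u, v of H and every x ∈ f⁻¹(u), there exists y ∈ f⁻¹(v) with x adjacent to y in G. Then G is connected. -/

import Mathlib

/-!
Any two vertices `x`, `y` of `G` are joined as follows: take a walk from `f x` to `f y` in `H`,
lift its edges one at a time starting from `x`, and finally connect the endpoint of the lift to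
`y` inside the fiber over `f y`.
-/

namespace SimpleGraph

variable {α β : Type*} {G : SimpleGraph α} {H : SimpleGraph β}

theorem Preconnected.reachable_of_induce {s : Set α} (hs : (G.induce s).Preconnected)
    {x y : α} (hx : x ∈ s) (hy : y ∈ s) : G.Reachable x y :=
  (hs ⟨x, hx⟩ ⟨y, hy⟩).map (Embedding.induce s).toHom

theorem Reachable.lift_of_fibers {f : α → β}
    (hfib : ∀ v, (G.induce (f ⁻¹' {v})).Preconnected)
    (hlift : ∀ u v, H.Adj u v → ∀ x ∈ f ⁻¹' {u}, ∃ y ∈ f ⁻¹' {v}, G.Adj x y)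
    {x y : α} (h : H.Reachable (f x) (f y)) : G.Reachable x y := by
  obtain ⟨w⟩ := h
  suffices ∀ {u v} (w : H.Walk u v) (x y : α), f x = u → f y = v → G.Reachable x y from
    this w x y rfl rfl
  intro u v w
  induction w with
  | nil => exact fun x y hx hy => (hfib _).reachable_of_induce hx hy
  | cons hadj _ ih =>
    intro x y hx hy
    obtain ⟨z, hz, hxz⟩ := hlift _ _ hadj x hx
    exact hxz.reachable.trans (ih z y hz hy)

end SimpleGraph

theorem connected_of_map_fibers_general {α β : Type*} (G : SimpleGraph α) (H : SimpleGraph β)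
    (f : α → β)
    (hH : H.Connected)
    (hfib : ∀ v : β, (f ⁻¹' {v}).Nonempty ∧ (G.induce (f ⁻¹' {v})).Connected)
    (hlift : ∀ u v : β, H.Adj u v → ∀ x ∈ f ⁻¹' {u}, ∃ y ∈ f ⁻¹' {v}, G.Adj x y) :
    G.Connected := by
  obtain ⟨v⟩ := hH.nonempty
  have : Nonempty α := ⟨(hfib v).1.some⟩
  exact ⟨fun x y =>
    (hH.preconnected (f x) (f y)).lift_of_fibers (fun v => (hfib v).2.preconnected) hlift⟩

/-- Connectedness criterion for a graph map `f : α → β` carrying a simple graph `G`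
onto a simple graph `H`: if `H` is connected, every fiber of `f` is nonempty with
connected induced subgraph, and every edge of `H` can be lifted starting at any
point of the fiber over its initial vertex, then `G` is connected. -/
theorem connected_of_map_fibers {α β : Type*} (G : SimpleGraph α) (H : SimpleGraph β)
    (f : α → β)
    (hmap : ∀ x y : α, G.Adj x y → f x = f y ∨ H.Adj (f x) (f y))
    (hH : H.Connected)
    (hfib : ∀ v : β, (f ⁻¹' {v}).Nonempty ∧ (G.induce (f ⁻¹' {v})).Connected)
    (hlift : ∀ u v : β, H.Adj u v → ∀ x ∈ f ⁻¹' {u}, ∃ y ∈ f ⁻¹' {v}, G.Adj x y) :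
    G.Connected :=
  connected_of_map_fibers_general G H f hH hfib hlift
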